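/- On the reference triangle, the space S_m = {p ∈ (P_m)² : x₁ p₁ + x₂ p₂ = 0 identically} is exactly the set of vector fields of the form q(x₁,x₂)·(−x₂, x₁) with q a homogeneous-degree-decomposable polynomial of degree at most m−1; in particular, every p ∈ S_m can be written p = q·(−x₂, x₁) for a unique polynomial q of total degree ≤ m−1, and dim S_m = m(m+1)/2. -/

import Mathlib

open MvPolynomial

/-!
Since `X 0` is prime and does not divide `X 1`, the relation `X 0 * p 0 = -(X 1 * p 1)` forces
`p 1 = X 0 * q` and then `p 0 = -X 1 * q`. So `S_m` is the image of the polynomials of total degree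
`≤ m - 1` under the injective map `q ↦ q • (-X 1, X 0)`, and its dimension is the number of
monomials of degree `≤ m - 1` in two variables. Homogenizing, these are the multisets of size
`m - 1` over three letters, of which there are `(m + 1).choose 2`.
-/

/-- The space `S_m` of vector polynomials of total degree at most `m` whose scalar product
with the position vector vanishes identically. -/
noncomputable def Sm (m : ℕ) : Submodule ℝ (Fin 2 → MvPolynomial (Fin 2) ℝ) where
  carrier := {p | (∀ i, (p i).totalDegree ≤ m) ∧ X 0 * p 0 + X 1 * p 1 = 0}
  add_mem' := by
    rintro a b ⟨hda, ha⟩ ⟨hdb, hb⟩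
    refine ⟨fun i => le_trans (totalDegree_add _ _) (max_le (hda i) (hdb i)), ?_⟩
    have : X 0 * (a + b) 0 + X 1 * (a + b) 1 =
        (X 0 * a 0 + X 1 * a 1) + (X 0 * b 0 + X 1 * b 1) := by
      simp [Pi.add_apply]; ring
    rw [this, ha, hb, add_zero]
  zero_mem' := ⟨fun i => by simp, by simp⟩
  smul_mem' := by
    rintro c p ⟨hd, hp⟩
    refine ⟨fun i => le_trans (totalDegree_smul_le c (p i)) (hd i), ?_⟩
    have : X 0 * (c • p) 0 + X 1 * (c • p) 1 = c • (X 0 * p 0 + X 1 * p 1) := by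
      simp [Pi.smul_apply, smul_add, mul_smul_comm]
    rw [this, hp, smul_zero]

namespace Finsupp

lemma sum_eq_apply_zero_add_sum_tail {k : ℕ} (P : Fin (k + 1) →₀ ℕ) :
    (P.sum fun _ e => e) = P 0 + (tail P).sum fun _ e => e := by
  conv_lhs => rw [← cons_tail P]
  rw [sum_cons]

/-- Homogenization: the new coordinate `0` records the missing degree `n - |d|`. -/
noncomputable def sumLeEquivSumEq (k n : ℕ) :
    {d : Fin k →₀ ℕ // (d.sum fun _ e => e) ≤ n} ≃
      {P : Fin (k + 1) →₀ ℕ // (P.sum fun _ e => e) = n} where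
  toFun d := ⟨cons (n - d.1.sum fun _ e => e) d.1, by rw [sum_cons]; have := d.2; omega⟩
  invFun P := ⟨tail P.1, by have := P.2; rw [sum_eq_apply_zero_add_sum_tail] at this; omega⟩
  left_inv d := by simp
  right_inv P := by
    have := P.2
    rw [sum_eq_apply_zero_add_sum_tail] at this
    ext1
    conv_rhs => rw [← cons_tail P.1]
    dsimp only
    congr 1
    omega

theorem card_sum_le_eq_choose (k n : ℕ) :
    Nat.card {d : Fin k →₀ ℕ // (d.sum fun _ e => e) ≤ n} = (n + k).choose k := by
  rw [Nat.card_congr ((sumLeEquivSumEq k n).trans (Sym.equivNatSum (Fin (k + 1)) n).symm),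
    Nat.card_eq_fintype_card, Sym.card_sym_eq_choose, Fintype.card_fin,
    show k + 1 + n - 1 = n + k by omega, Nat.choose_symm_add]

end Finsupp

namespace MvPolynomial

theorem finrank_restrictTotalDegree_fin (R : Type*) [CommRing R] [StrongRankCondition R]
    (k n : ℕ) : Module.finrank R (restrictTotalDegree (Fin k) R n) = (n + k).choose k := by
  rw [← Finsupp.card_sum_le_eq_choose]
  exact Module.finrank_eq_nat_card_basis (basisRestrictSupport R _)

variable {R σ : Type*} [CommRing R] [IsDomain R]

theorem totalDegree_X_mul_le_iff {i : σ} {q : MvPolynomial σ R} {m : ℕ} (hm : 1 ≤ m) :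
    (X i * q).totalDegree ≤ m ↔ q.totalDegree ≤ m - 1 := by
  rcases eq_or_ne q 0 with rfl | hq
  · simp
  rw [totalDegree_mul_of_isDomain (X_ne_zero i) hq, totalDegree_X]
  omega

theorem X_mul_add_X_mul_eq_zero_iff {i j : σ} (hij : i ≠ j) {a b : MvPolynomial σ R} :
    X i * a + X j * b = 0 ↔ ∃ q, a = -X j * q ∧ b = X i * q := by
  refine ⟨fun h => ?_, fun ⟨q, ha, hb⟩ => by rw [ha, hb]; ring⟩
  have hdvd : X i ∣ X j * b := ⟨-a, by linear_combination h⟩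
  obtain ⟨q, hq⟩ := (X_prime.dvd_or_dvd hdvd).resolve_left (mt X_dvd_X.mp hij)
  refine ⟨q, mul_left_cancel₀ (X_ne_zero i) ?_, hq⟩
  linear_combination h - X j * hq

end MvPolynomial

variable (R : Type*) [CommRing R]

noncomputable def mulPerp : MvPolynomial (Fin 2) R →ₗ[R] Fin 2 → MvPolynomial (Fin 2) R :=
  LinearMap.pi ![LinearMap.mulLeft R (-X 1), LinearMap.mulLeft R (X 0)]

variable {R}

@[simp] theorem mulPerp_apply_zero (q : MvPolynomial (Fin 2) R) : mulPerp R q 0 = -X 1 * q := by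
  simp [mulPerp]

@[simp] theorem mulPerp_apply_one (q : MvPolynomial (Fin 2) R) : mulPerp R q 1 = X 0 * q := by
  simp [mulPerp]

theorem mulPerp_eq_iff {p : Fin 2 → MvPolynomial (Fin 2) R} {q : MvPolynomial (Fin 2) R} :
    mulPerp R q = p ↔ p 0 = -X 1 * q ∧ p 1 = X 0 * q := by
  simp [funext_iff, Fin.forall_fin_two, eq_comm]

theorem mulPerp_injective [IsDomain R] : Function.Injective (mulPerp R) := fun a b h =>
  mul_left_cancel₀ (X_ne_zero 0) (by simpa using congrFun h 1)

namespace Sm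

theorem mem_iff {m : ℕ} (hm : 1 ≤ m) {p : Fin 2 → MvPolynomial (Fin 2) ℝ} :
    p ∈ Sm m ↔ ∃ q : MvPolynomial (Fin 2) ℝ,
      q.totalDegree ≤ m - 1 ∧ p 0 = -(X 1) * q ∧ p 1 = X 0 * q := by
  change ((∀ i, _) ∧ _) ↔ _
  rw [Fin.forall_fin_two, X_mul_add_X_mul_eq_zero_iff zero_ne_one]
  constructor
  · rintro ⟨⟨-, hdeg⟩, q, h0, h1⟩
    exact ⟨q, (totalDegree_X_mul_le_iff hm).mp (h1 ▸ hdeg), h0, h1⟩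
  · rintro ⟨q, hq, h0, h1⟩
    refine ⟨⟨?_, ?_⟩, q, h0, h1⟩
    · rwa [h0, neg_mul, totalDegree_neg, totalDegree_X_mul_le_iff hm]
    · rwa [h1, totalDegree_X_mul_le_iff hm]

theorem eq_map_mulPerp {m : ℕ} (hm : 1 ≤ m) :
    Sm m = (restrictTotalDegree (Fin 2) ℝ (m - 1)).map (mulPerp ℝ) := by
  ext p
  simp only [mem_iff hm, Submodule.mem_map, mem_restrictTotalDegree, mulPerp_eq_iff]

end Sm

/-- `S_m` consists exactly of the multiples `q ⬝ (-x₂, x₁)` with `deg q ≤ m - 1`, the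
representation is unique, and `dim S_m = m (m + 1) / 2`. -/
theorem Sm_characterization (m : ℕ) (hm : 1 ≤ m) :
    (∀ p : Fin 2 → MvPolynomial (Fin 2) ℝ,
        p ∈ Sm m ↔ ∃ q : MvPolynomial (Fin 2) ℝ,
          q.totalDegree ≤ m - 1 ∧ p 0 = -(X 1) * q ∧ p 1 = X 0 * q) ∧
    (∀ p ∈ Sm m, ∃! q : MvPolynomial (Fin 2) ℝ,
        q.totalDegree ≤ m - 1 ∧ p 0 = -(X 1) * q ∧ p 1 = X 0 * q) ∧
    Module.finrank ℝ (Sm m) = m * (m + 1) / 2 := by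
  refine ⟨fun p => Sm.mem_iff hm, fun p hp => ?_, ?_⟩
  · obtain ⟨q, hq⟩ := (Sm.mem_iff hm).mp hp
    refine ⟨q, hq, fun q' hq' => mulPerp_injective ?_⟩
    rw [mulPerp_eq_iff.mpr hq.2, mulPerp_eq_iff.mpr hq'.2]
  · rw [Sm.eq_map_mulPerp hm,
      ← (Submodule.equivMapOfInjective _ mulPerp_injective _).finrank_eq,
      finrank_restrictTotalDegree_fin, Nat.choose_two_right, show m - 1 + 2 = m + 1 by omega,
      Nat.add_sub_cancel, mul_comm]
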